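/- Let G be a group, H a subgroup of G, and N ⊆ M subgroups of G each normalized by H. If the indices [M:N], [MH:NH], and [M∩H : N∩H] are finite, then [MH : NH] = [M:N] / [M∩H : N∩H]. -/

import Mathlib

/-! Put `X = M ⊓ (N ⊔ H)`, so that `[M : N] = [X : N] * [M : X]`. By Dedekind's law
`X = N ⊔ (M ⊓ H)`, and the second isomorphism theorem gives `[X : N] = [M ⊓ H : N ⊓ H]`.
Since `M ⊔ H = M * H ⊆ M * (N ⊔ H)`, every coset of `N ⊔ H` in `M ⊔ H` meets `M`, whence
`[M : X] = [M ⊔ H : N ⊔ H]`. -/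

open scoped Pointwise

namespace Subgroup

variable {G : Type*} [Group G]

theorem relIndex_sup_left_of_le_normalizer {H K : Subgroup G} (hH : H ≤ normalizer (K : Set G)) :
    K.relIndex (K ⊔ H) = K.relIndex H := by
  have := normal_subgroupOf_of_le_normalizer hH
  have := normal_subgroupOf_sup_of_le_normalizer hH
  rw [sup_comm]
  exact Nat.card_congr (QuotientGroup.quotientInfEquivProdNormalizerQuotient H K hH).toEquiv.symm

theorem inf_sup_eq_sup_inf_of_le_normalizer {H M N : Subgroup G} (hNM : N ≤ M)
    (hHN : H ≤ normalizer (N : Set G)) : M ⊓ (N ⊔ H) = N ⊔ (M ⊓ H) := by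
  apply SetLike.coe_injective
  rw [coe_mul_of_right_le_normalizer_left N _ (inf_le_right.trans hHN), inf_comm M H,
    mul_inf_assoc N H M hNM, coe_inf, coe_mul_of_right_le_normalizer_left N H hHN, Set.inter_comm]

theorem relIndex_eq_relIndex_of_le_of_subset_mul {K L M : Subgroup G} (hML : M ≤ L)
    (hLMK : (L : Set G) ⊆ (M : Set G) * (K : Set G)) : K.relIndex M = K.relIndex L := by
  have key : ∀ x y : M, QuotientGroup.leftRel (K.subgroupOf M) x y ↔
      QuotientGroup.leftRel (K.subgroupOf L) (inclusion hML x) (inclusion hML y) := by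
    simp [QuotientGroup.leftRel_apply, mem_subgroupOf]
  refine Nat.card_congr
    (Equiv.ofBijective (Quotient.map' (inclusion hML) fun x y => (key x y).mp) ⟨?_, ?_⟩)
  · simp_rw [← Quotient.eq''] at key
    refine Quotient.ind' fun x => Quotient.ind' fun y => ?_
    exact (key x y).mpr
  · rintro ⟨l, hl⟩
    obtain ⟨m, hm, k, hk, rfl⟩ := hLMK hl
    refine ⟨Quotient.mk'' ⟨m, hm⟩, Quotient.sound' ?_⟩
    simpa [QuotientGroup.leftRel_apply, mem_subgroupOf] using hk

theorem relIndex_inf_mul_relIndex_sup {H M N : Subgroup G} (hNM : N ≤ M)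
    (hHM : H ≤ normalizer (M : Set G)) (hHN : H ≤ normalizer (N : Set G)) :
    (N ⊓ H).relIndex (M ⊓ H) * (N ⊔ H).relIndex (M ⊔ H) = N.relIndex M := by
  have hX : M ⊓ (N ⊔ H) = N ⊔ (M ⊓ H) := inf_sup_eq_sup_inf_of_le_normalizer hNM hHN
  have lower : N.relIndex (M ⊓ (N ⊔ H)) = (N ⊓ H).relIndex (M ⊓ H) := by
    rw [hX, relIndex_sup_left_of_le_normalizer (inf_le_right.trans hHN), ← inf_relIndex_right,
      ← inf_assoc, inf_of_le_left hNM]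
  have upper : (M ⊓ (N ⊔ H)).relIndex M = (N ⊔ H).relIndex (M ⊔ H) := by
    refine (inf_relIndex_left M _).trans
      (relIndex_eq_relIndex_of_le_of_subset_mul (le_sup_left : M ≤ M ⊔ H) ?_)
    rw [coe_mul_of_right_le_normalizer_left M H hHM]
    exact Set.mul_subset_mul_left (SetLike.coe_subset_coe.mpr le_sup_right)
  rw [← lower, ← upper]
  exact relIndex_mul_relIndex N _ M (le_inf hNM le_sup_left) inf_le_left

end Subgroup

theorem stmt0_general {G : Type*} [Group G] (H M N : Subgroup G)
    (hNM : N ≤ M)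
    (hHM : H ≤ Subgroup.normalizer (M : Set G)) (hHN : H ≤ Subgroup.normalizer (N : Set G))
    (h3 : (N ⊓ H).relIndex (M ⊓ H) ≠ 0) :
    (N ⊔ H).relIndex (M ⊔ H) = N.relIndex M / (N ⊓ H).relIndex (M ⊓ H) := by
  rw [← Subgroup.relIndex_inf_mul_relIndex_sup hNM hHM hHN,
    Nat.mul_div_cancel_left _ (Nat.pos_of_ne_zero h3)]

/-- Let `G` be a group, `H` a subgroup, and `N ⊆ M` subgroups each
normalized by `H`.  If the indices `[M:N]`, `[MH:NH]` and `[M∩H : N∩H]` are finite,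
then `[MH:NH] = [M:N] / [M∩H : N∩H]`.  Here `Subgroup.relindex N M` is the index of
`N` in `M`, and `MH = M ⊔ H`, `NH = N ⊔ H` (which equal the set products since `H`
normalizes `M` and `N`). -/
theorem stmt0 {G : Type*} [Group G] (H M N : Subgroup G)
    (hNM : N ≤ M)
    (hHM : H ≤ Subgroup.normalizer (M : Set G)) (hHN : H ≤ Subgroup.normalizer (N : Set G))
    (h1 : N.relIndex M ≠ 0)
    (h2 : (N ⊔ H).relIndex (M ⊔ H) ≠ 0)
    (h3 : (N ⊓ H).relIndex (M ⊓ H) ≠ 0) :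
    (N ⊔ H).relIndex (M ⊔ H) = N.relIndex M / (N ⊓ H).relIndex (M ⊓ H) :=
  stmt0_general H M N hNM hHM hHN h3
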